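/- (Multi-source outer bound, Theorem 3.) Every achievable point (μ_Ω, R_K) lies in R_o, and R_o ⊆ R_o'. Here R_o is the set of points (μ_Ω, R_K) for which there exist finitely supported random variables U_1, …, U_K, jointly distributed with X_1, …, X_K, such that for every subset S ⊆ {1,…,K} the Markov chain U_S–X_S–X_{{1,…,K}} holds (U_S is conditionally independent of (X_1,…,X_K) given X_S), R_k ≥ I(U_k; X_k) for every k, and μ_{A,B} ≤ I(U_A; X_A) + I(U_B; X_B) − I((U_A, U_B); (X_A, X_B)) for every (A, B) ∈ Ω; R_o' is defined the same way except that the last constraint is replaced by μ_{A,B} ≤ I(U_A; X_B) for every (A, B) ∈ Ω. -/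

import Mathlib

open scoped BigOperators Classical

namespace Biclustering

variable {α β γ σ : Type*}

/-- A probability mass function on a finite type. -/
def IsPMF [Fintype α] (p : α → ℝ) : Prop := (∀ a, 0 ≤ p a) ∧ ∑ a, p a = 1

/-- Shannon entropy (in nats) of a pmf on a finite type. -/
noncomputable def ent [Fintype α] (p : α → ℝ) : ℝ := - ∑ a, p a * Real.log (p a)

/-- Pushforward (distribution of `f` under `p`). -/
noncomputable def pmap [Fintype α] (f : α → β) (p : α → ℝ) : β → ℝ :=
  fun b => ∑ a, if f a = b then p a else 0

/-- Entropy of the random variable `f` under the joint pmf `p`. -/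
noncomputable def Hof [Fintype α] [Fintype β] (p : α → ℝ) (f : α → β) : ℝ := ent (pmap f p)

/-- Mutual information `I(f; g)` under the joint pmf `p`. -/
noncomputable def MI [Fintype α] [Fintype β] [Fintype γ] (p : α → ℝ) (f : α → β) (g : α → γ) : ℝ :=
  Hof p f + Hof p g - Hof p (fun a => (f a, g a))

/-- Conditional mutual information `I(f; g | m)` under the joint pmf `p`. -/
noncomputable def CMI [Fintype α] [Fintype β] [Fintype γ] [Fintype σ]
    (p : α → ℝ) (f : α → β) (g : α → γ) (m : α → σ) : ℝ :=
  Hof p (fun a => (f a, m a)) + Hof p (fun a => (g a, m a))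
    - Hof p (fun a => (f a, g a, m a)) - Hof p m

/-- `f` and `g` are conditionally independent given `m` (a Markov chain `f – m – g`). -/
def CondIndep [Fintype α] (p : α → ℝ) (f : α → β) (g : α → γ) (m : α → σ) : Prop :=
  ∀ b c s, pmap (fun a => (f a, g a, m a)) p (b, c, s) * pmap m p s
    = pmap (fun a => (f a, m a)) p (b, s) * pmap (fun a => (g a, m a)) p (c, s)

/-- The pmf of `n` i.i.d. copies of a source with pmf `p`. -/
noncomputable def iid [Fintype α] (n : ℕ) (p : α → ℝ) : (Fin n → α) → ℝ :=
  fun x => ∏ i, p (x i)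

/-- The index set `Ω`: pairs of nonempty disjoint subsets of `{1, …, K}`. -/
def Omega (K : ℕ) : Type :=
  {AB : Finset (Fin K) × Finset (Fin K) // AB.1.Nonempty ∧ AB.2.Nonempty ∧ Disjoint AB.1 AB.2}

variable {K : ℕ}

/-- Restriction of a tuple to the coordinates in a subset `A`. -/
def restr {𝒯 : Fin K → Type} (A : Finset (Fin K)) (x : ∀ k, 𝒯 k) :
    ∀ k : {k // k ∈ A}, 𝒯 k.1 :=
  fun k => x k.1

variable {𝒳 : Fin K → Type} [∀ k, Fintype (𝒳 k)]

/-- `(μ_Ω, R_K)` is achievable for the multi-source biclustering problem with source pmf `p`. -/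
def AchievableM (p : (∀ k, 𝒳 k) → ℝ) (μ : Omega K → ℝ) (R : Fin K → ℝ) : Prop :=
  ∃ (n : ℕ) (M : Fin K → ℕ) (f : ∀ k, (Fin n → 𝒳 k) → Fin (M k)),
    0 < n ∧ (∀ k, Real.log (M k) ≤ n * R k) ∧
    ∀ AB : Omega K,
      μ AB ≤ (MI (iid n p)
        (fun ω => fun k : {k // k ∈ AB.1.1} => f k.1 (fun i => ω i k.1))
        (fun ω => fun k : {k // k ∈ AB.1.2} => f k.1 (fun i => ω i k.1))) / n

/-- The rate constraints and the Markov structure common to `R_o` and `R_o'`: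
`q` is a joint pmf of `(U_1, …, U_K, X_1, …, X_K)` with `X`-marginal `p` such that
`U_S – X_S – X_{{1,…,K}}` is a Markov chain for every `S ⊆ {1,…,K}`. -/
def OuterWitnessM {𝒰 : Fin K → Type} [∀ k, Fintype (𝒰 k)]
    (p : (∀ k, 𝒳 k) → ℝ) (q : ((∀ k, 𝒰 k) × (∀ k, 𝒳 k)) → ℝ) : Prop :=
  IsPMF q ∧ pmap Prod.snd q = p ∧
    ∀ S : Finset (Fin K),
      CondIndep q (fun w => restr S w.1) (fun w => w.2) (fun w => restr S w.2)

/-- The multi-source outer-bound region `R_o`. -/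
def RoM (p : (∀ k, 𝒳 k) → ℝ) : Set ((Omega K → ℝ) × (Fin K → ℝ)) :=
  { t | ∃ (𝒰 : Fin K → Type) (_ : ∀ k, Fintype (𝒰 k))
      (q : ((∀ k, 𝒰 k) × (∀ k, 𝒳 k)) → ℝ),
      OuterWitnessM p q ∧
      (∀ k, MI q (fun w => w.1 k) (fun w => w.2 k) ≤ t.2 k) ∧
      ∀ AB : Omega K, t.1 AB ≤
        MI q (fun w => restr AB.1.1 w.1) (fun w => restr AB.1.1 w.2)
        + MI q (fun w => restr AB.1.2 w.1) (fun w => restr AB.1.2 w.2)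
        - MI q (fun w => (restr AB.1.1 w.1, restr AB.1.2 w.1))
            (fun w => (restr AB.1.1 w.2, restr AB.1.2 w.2)) }

/-- The multi-source outer-bound region `R_o'`. -/
def RoM' (p : (∀ k, 𝒳 k) → ℝ) : Set ((Omega K → ℝ) × (Fin K → ℝ)) :=
  { t | ∃ (𝒰 : Fin K → Type) (_ : ∀ k, Fintype (𝒰 k))
      (q : ((∀ k, 𝒰 k) × (∀ k, 𝒳 k)) → ℝ),
      OuterWitnessM p q ∧
      (∀ k, MI q (fun w => w.1 k) (fun w => w.2 k) ≤ t.2 k) ∧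
      ∀ AB : Omega K, t.1 AB ≤
        MI q (fun w => restr AB.1.1 w.1) (fun w => restr AB.1.2 w.2) }

/-!
Converse part: for a code `f` of block length `n`, let `J` be uniform on the time indices and
independent of the source block, and put `U_k = (J, f_k(X_k^n), X_{k,1}, …, X_{k,J-1})`, `X = X_J`.
The tuple `U_S` sees the letter `X_J` only through `X_{S,J}`, and the letters are independent, so
`U_S – X_S – X` is a Markov chain. For nonempty `T` the chain rule telescopes to
`I(U_T; X_T) = H(f_T(X_T^n)) / n`; this gives `I(U_k; X_k) ≤ log |M_k| / n ≤ R_k`, and turns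
`I(U_A; X_A) + I(U_B; X_B) - I(U_A U_B; X_A X_B)` into `I(f_A; f_B) / n ≥ μ_{A,B}`.

The inclusion `R_o ⊆ R_o'` is a Shannon inequality: `I(U_A; X_B)` exceeds
`I(U_A; X_A) + I(U_B; X_B) - I(U_A U_B; X_A X_B)` by
`I(U_A; X_B | X_A) + I(U_B; X_A | U_A, X_B) + I(U_A; X_B | U_B) ≥ 0`.
-/

section Entropy

variable [Fintype α]

lemma pmap_nonneg {p : α → ℝ} (hp : ∀ a, 0 ≤ p a) (f : α → β) (b : β) : 0 ≤ pmap f p b :=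
  Finset.sum_nonneg fun a _ => by split_ifs <;> simp [hp a]

lemma le_pmap_apply_self {p : α → ℝ} (hp : ∀ a, 0 ≤ p a) (f : α → β) (a : α) :
    p a ≤ pmap f p (f a) := by
  have := Finset.single_le_sum (f := fun a' => if f a' = f a then p a' else 0)
    (fun a' _ => by split_ifs <;> simp [hp a']) (Finset.mem_univ a)
  simpa [pmap] using this

lemma pmap_eq_zero_of_forall_ne {p : α → ℝ} {f : α → β} {b : β} (h : ∀ a, f a ≠ b) :
    pmap f p b = 0 :=
  Finset.sum_eq_zero fun a _ => if_neg (h a)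

lemma sum_pmap_mul [Fintype β] (f : α → β) (p : α → ℝ) (φ : β → ℝ) :
    ∑ b, pmap f p b * φ b = ∑ a, p a * φ (f a) := by
  simp only [pmap, Finset.sum_mul, ite_mul, zero_mul]
  rw [Finset.sum_comm]
  simp

lemma pmap_comp [Fintype β] (g : β → γ) (f : α → β) (p : α → ℝ) :
    pmap g (pmap f p) = pmap (fun a => g (f a)) p := by
  funext c
  simpa [pmap] using sum_pmap_mul f p (fun b => if g b = c then (1 : ℝ) else 0)

lemma pmap_id (p : α → ℝ) : pmap (fun a => a) p = p :=
  funext fun b => by simp [pmap]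

lemma isPMF_pmap [Fintype β] {p : α → ℝ} (hp : IsPMF p) (f : α → β) : IsPMF (pmap f p) :=
  ⟨pmap_nonneg hp.1 f, by simpa [hp.2] using sum_pmap_mul f p 1⟩

lemma Hof_eq_neg_sum [Fintype β] (p : α → ℝ) (f : α → β) :
    Hof p f = -∑ a, p a * Real.log (pmap f p (f a)) := by
  rw [Hof, ent, sum_pmap_mul f p (fun b => Real.log (pmap f p b))]

lemma Hof_pmap [Fintype β] [Fintype γ] (Φ : α → β) (p : α → ℝ) (g : β → γ) :
    Hof (pmap Φ p) g = Hof p (fun a => g (Φ a)) := by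
  rw [Hof, Hof, pmap_comp]

lemma Hof_congr [Fintype β] [Fintype γ] {p : α → ℝ} {f : α → β} {g : α → γ}
    (hfg : ∀ a a', f a = f a' ↔ g a = g a') : Hof p f = Hof p g := by
  have hP : ∀ a, pmap f p (f a) = pmap g p (g a) := fun a => by
    simp only [pmap, hfg]
  simp only [Hof_eq_neg_sum, hP]

lemma MI_congr {δ : Type*} [Fintype β] [Fintype γ] [Fintype σ] [Fintype δ] {p : α → ℝ}
    {f : α → β} {f' : α → γ} {g : α → σ} {g' : α → δ}
    (hf : ∀ a a', f a = f a' ↔ f' a = f' a') (hg : ∀ a a', g a = g a' ↔ g' a = g' a') :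
    MI p f g = MI p f' g' := by
  rw [MI, MI, Hof_congr hf, Hof_congr hg,
    Hof_congr (f := fun a => (f a, g a)) (g := fun a => (f' a, g' a))
      fun a a' => by simp only [Prod.mk.injEq, hf, hg]]

lemma MI_pmap [Fintype β] [Fintype γ] [Fintype σ] (Φ : α → β) (p : α → ℝ) (f : β → γ) (g : β → σ) :
    MI (pmap Φ p) f g = MI p (fun a => f (Φ a)) (fun a => g (Φ a)) := by
  simp only [MI, Hof_pmap]

lemma sum_mul_log_le {p : α → ℝ} (hp : IsPMF p) (Y : α → ℝ) (hY : ∀ a, p a ≠ 0 → 0 < Y a) :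
    ∑ a, p a * Real.log (Y a) ≤ ∑ a, p a * Y a - 1 := by
  rw [← hp.2, ← Finset.sum_sub_distrib]
  refine Finset.sum_le_sum fun a _ => ?_
  rcases eq_or_ne (p a) 0 with h | h
  · simp [h]
  · nlinarith [Real.log_le_sub_one_of_pos (hY a h), hp.1 a]

lemma mul_div_le_of_nonneg {x c : ℝ} (hx : 0 ≤ x) (hc : 0 ≤ c) : x * (c / x) ≤ c := by
  rcases eq_or_lt_of_le hx with rfl | hx
  · simpa using hc
  · rw [mul_div_cancel₀ c hx.ne']

lemma ent_le_log_card [Fintype β] {q : β → ℝ} (hq : IsPMF q) :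
    ent q ≤ Real.log (Fintype.card β) := by
  have hN : (0 : ℝ) < Fintype.card β := by
    have : Nonempty β := by
      by_contra h
      simpa [not_nonempty_iff.mp h] using hq.2
    exact_mod_cast Fintype.card_pos
  have key := sum_mul_log_le hq (fun b => (Fintype.card β : ℝ)⁻¹ / q b)
    fun b hb => div_pos (inv_pos.mpr hN) (lt_of_le_of_ne (hq.1 b) (Ne.symm hb))
  have hsum : ∑ b, q b * ((Fintype.card β : ℝ)⁻¹ / q b) ≤ 1 := by
    calc _ ≤ ∑ _b : β, (Fintype.card β : ℝ)⁻¹ :=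
          Finset.sum_le_sum fun b _ => mul_div_le_of_nonneg (hq.1 b) (inv_nonneg.mpr hN.le)
      _ = 1 := by simp [hN.ne']
  have hlog : ∀ b, q b * Real.log ((Fintype.card β : ℝ)⁻¹ / q b)
      = -(q b * Real.log (q b)) - q b * Real.log (Fintype.card β) := fun b => by
    rcases eq_or_ne (q b) 0 with h | h
    · simp [h]
    · rw [Real.log_div (inv_ne_zero hN.ne') h, Real.log_inv]; ring
  simp only [hlog, Finset.sum_sub_distrib, ← Finset.sum_mul, hq.2, Finset.sum_neg_distrib] at key
  rw [ent]
  linarith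

end Entropy

section Shannon

variable [Fintype α] [Fintype β]

lemma sum_pmap_pair_left (p : α → ℝ) (f : α → β) (m : α → σ) (s : σ) :
    ∑ b, pmap (fun a => (f a, m a)) p (b, s) = pmap m p s := by
  simp only [pmap, Prod.mk.injEq]
  rw [Finset.sum_comm]
  refine Finset.sum_congr rfl fun a _ => ?_
  by_cases h : m a = s <;> simp [h]

lemma sum_pmap_mul_pmap_div_pmap [Fintype γ] [Fintype σ] {p : α → ℝ} (hp : IsPMF p) (f : α → β)
    (g : α → γ) (m : α → σ) :
    ∑ t : β × γ × σ, pmap (fun a => (f a, m a)) p (t.1, t.2.2)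
      * pmap (fun a => (g a, m a)) p (t.2.1, t.2.2) / pmap m p t.2.2 = 1 := by
  let Q : β → γ → σ → ℝ := fun b c s =>
    pmap (fun a => (f a, m a)) p (b, s) * pmap (fun a => (g a, m a)) p (c, s) / pmap m p s
  have hs : ∀ s, ∑ b, ∑ c, Q b c s = pmap m p s := fun s => calc
    _ = (∑ b, pmap (fun a => (f a, m a)) p (b, s))
          * (∑ c, pmap (fun a => (g a, m a)) p (c, s)) / pmap m p s := by
      simp only [Q, Finset.sum_mul_sum, Finset.sum_div]
    _ = pmap m p s := by rw [sum_pmap_pair_left, sum_pmap_pair_left, mul_self_div_self]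
  calc _ = ∑ b, ∑ s, ∑ c, Q b c s := by
        simp only [Fintype.sum_prod_type]
        exact Finset.sum_congr rfl fun b _ => Finset.sum_comm
    _ = ∑ s, ∑ b, ∑ c, Q b c s := Finset.sum_comm
    _ = 1 := by simp only [hs, (isPMF_pmap hp m).2]

lemma CMI_nonneg [Fintype γ] [Fintype σ] {p : α → ℝ} (hp : IsPMF p) (f : α → β) (g : α → γ)
    (m : α → σ) :
    0 ≤ CMI p f g m := by
  let P₁₃ : β × σ → ℝ := pmap (fun a => (f a, m a)) p
  let P₂₃ : γ × σ → ℝ := pmap (fun a => (g a, m a)) p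
  let P₃ : σ → ℝ := pmap m p
  let P : β × γ × σ → ℝ := pmap (fun a => (f a, g a, m a)) p
  let Q : β × γ × σ → ℝ := fun t => P₁₃ (t.1, t.2.2) * P₂₃ (t.2.1, t.2.2) / P₃ t.2.2
  let Y : α → ℝ := fun a => Q (f a, g a, m a) / P (f a, g a, m a)
  have hpos : ∀ a, p a ≠ 0 → 0 < P₁₃ (f a, m a) ∧ 0 < P₂₃ (g a, m a) ∧ 0 < P₃ (m a)
      ∧ 0 < P (f a, g a, m a) := fun a ha => by
    have h : 0 < p a := lt_of_le_of_ne (hp.1 a) (Ne.symm ha)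
    exact ⟨h.trans_le (le_pmap_apply_self hp.1 _ a), h.trans_le (le_pmap_apply_self hp.1 _ a),
      h.trans_le (le_pmap_apply_self hp.1 _ a), h.trans_le (le_pmap_apply_self hp.1 _ a)⟩
  have hlog : ∀ a, p a * Real.log (Y a) = p a * Real.log (P₁₃ (f a, m a))
      + p a * Real.log (P₂₃ (g a, m a)) - p a * Real.log (P (f a, g a, m a))
      - p a * Real.log (P₃ (m a)) := fun a => by
    rcases eq_or_ne (p a) 0 with h | h
    · simp [h]
    · obtain ⟨h₁₃, h₂₃, h₃, h₁₂₃⟩ := hpos a h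
      simp only [Y, Q]
      rw [Real.log_div (by positivity) h₁₂₃.ne', Real.log_div (by positivity) h₃.ne',
        Real.log_mul h₁₃.ne' h₂₃.ne']
      ring
  have hCMI : CMI p f g m = -∑ a, p a * Real.log (Y a) := by
    simp only [hlog, Finset.sum_sub_distrib, Finset.sum_add_distrib, CMI, Hof_eq_neg_sum]
    ring
  have hY : ∑ a, p a * Y a ≤ 1 := calc
    ∑ a, p a * Y a = ∑ t, P t * (Q t / P t) := (sum_pmap_mul _ p fun t => Q t / P t).symm
    _ ≤ ∑ t, Q t := Finset.sum_le_sum fun t _ => mul_div_le_of_nonneg (pmap_nonneg hp.1 _ t)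
      (div_nonneg (mul_nonneg (pmap_nonneg hp.1 _ _) (pmap_nonneg hp.1 _ _)) (pmap_nonneg hp.1 _ _))
    _ = 1 := sum_pmap_mul_pmap_div_pmap hp f g m
  have := sum_mul_log_le hp Y fun a ha => by
    obtain ⟨h₁₃, h₂₃, h₃, h₁₂₃⟩ := hpos a ha
    positivity
  linarith

end Shannon

lemma MI_add_MI_sub_MI_pair_le {δ ε : Type*} [Fintype α] [Fintype β] [Fintype γ] [Fintype δ]
    [Fintype ε] {p : α → ℝ} (hp : IsPMF p) (F : α → β) (G : α → γ) (Y : α → δ) (Z : α → ε) :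
    MI p F Y + MI p G Z - MI p (fun a => (F a, G a)) (fun a => (Y a, Z a)) ≤ MI p F Z := by
  have h₁ := CMI_nonneg hp F Z Y
  have h₂ := CMI_nonneg hp G Y fun a => (F a, Z a)
  have h₃ := CMI_nonneg hp F Z G
  have e₁ : Hof p (fun a => (Z a, Y a)) = Hof p (fun a => (Y a, Z a)) :=
    Hof_congr fun a a' => by simp only [Prod.mk.injEq]; tauto
  have e₂ : Hof p (fun a => (F a, Z a, Y a)) = Hof p (fun a => (Y a, F a, Z a)) :=
    Hof_congr fun a a' => by simp only [Prod.mk.injEq]; tauto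
  have e₃ : Hof p (fun a => (G a, F a, Z a)) = Hof p (fun a => (F a, Z a, G a)) :=
    Hof_congr fun a a' => by simp only [Prod.mk.injEq]; tauto
  have e₄ : Hof p (fun a => (G a, Y a, F a, Z a)) = Hof p (fun a => ((F a, G a), (Y a, Z a))) :=
    Hof_congr fun a a' => by simp only [Prod.mk.injEq]; tauto
  have e₅ : Hof p (fun a => (Z a, G a)) = Hof p (fun a => (G a, Z a)) :=
    Hof_congr fun a a' => by simp only [Prod.mk.injEq]; tauto
  simp only [CMI] at h₁ h₂ h₃
  simp only [MI]
  linarith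

lemma RoM_subset_RoM' (p : (∀ k, 𝒳 k) → ℝ) : RoM p ⊆ RoM' p := by
  rintro t ⟨𝒰, _, q, hq, hrate, hμ⟩
  exact ⟨𝒰, _, q, hq, hrate, fun AB => (hμ AB).trans (MI_add_MI_sub_MI_pair_le hq.1 _ _ _ _)⟩

section Iid

variable [Fintype α] {n : ℕ}

lemma iid_nonneg {p : α → ℝ} (hp : ∀ a, 0 ≤ p a) (x : Fin n → α) : 0 ≤ iid n p x :=
  Finset.prod_nonneg fun i _ => hp (x i)

lemma pmap_iid_map {δ : Type*} [Fintype δ] (p : α → ℝ) (h : α → δ) :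
    pmap (fun x i => h (x i)) (iid n p) = iid n (pmap h p) := by
  funext y
  simp only [pmap, iid, Fintype.prod_sum, funext_iff]
  refine Finset.sum_congr rfl fun x _ => ?_
  rw [Finset.prod_ite_zero]
  simp

lemma isPMF_iid {p : α → ℝ} (hp : IsPMF p) (n : ℕ) : IsPMF (iid n p) :=
  ⟨iid_nonneg hp.1, by simp [iid, ← Fintype.prod_sum, hp.2]⟩

lemma pmap_iid_eval {p : α → ℝ} (hp : IsPMF p) (j : Fin n) :
    pmap (fun x => x j) (iid n p) = p := by
  funext c
  have hx : ∀ x : Fin n → α, (if x j = c then iid n p x else 0)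
      = ∏ i, if i = j then (if x i = c then p (x i) else 0) else p (x i) := fun x => by
    by_cases hxj : x j = c
    · simp only [hxj, if_true, iid]
      exact Finset.prod_congr rfl fun i _ => by rcases eq_or_ne i j with rfl | hi <;> simp [*]
    · simp only [hxj, if_false]
      exact (Finset.prod_eq_zero (Finset.mem_univ j) (by simp [hxj])).symm
  simp only [pmap, hx]
  rw [← Fintype.prod_sum fun i a => if i = j then (if a = c then p a else 0) else p a,
    Fintype.prod_eq_single j fun i hi => by simp [hi, hp.2]]
  simp

lemma pmap_iid_apply {ε : Type*} [Fintype ε] {p : α → ℝ} (hp : IsPMF p) (j : Fin n) (ℓ : α → ε) :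
    pmap (fun x => ℓ (x j)) (iid n p) = pmap ℓ p := by
  rw [← pmap_comp, pmap_iid_eval hp j]

lemma ent_iid {p : α → ℝ} (hp : IsPMF p) (n : ℕ) : ent (iid n p) = n * ent p := by
  have hlog : ∀ x : Fin n → α,
      iid n p x * Real.log (iid n p x) = ∑ i, iid n p x * Real.log (p (x i)) := fun x => by
    by_cases hx : iid n p x = 0
    · simp [hx]
    · rw [← Finset.mul_sum, iid, Real.log_prod fun i _ => fun h => hx (Finset.prod_eq_zero
        (Finset.mem_univ i) h)]
  have hletter : ∀ i : Fin n, ∑ x, iid n p x * Real.log (p (x i)) = ∑ a, p a * Real.log (p a) :=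
    fun i => by
      simpa [pmap_iid_eval hp i] using (sum_pmap_mul (fun x : Fin n → α => x i) (iid n p)
        fun a => Real.log (p a)).symm
  simp only [ent, hlog]
  rw [Finset.sum_comm]
  simp [hletter]

lemma Hof_iid_map {δ : Type*} [Fintype δ] {p : α → ℝ} (hp : IsPMF p) (h : α → δ) :
    Hof (iid n p) (fun x i => h (x i)) = n * Hof p h := by
  rw [Hof, pmap_iid_map, ent_iid (isPMF_pmap hp h), Hof]

lemma iid_update_mul_iid_update (p : α → ℝ) (j : Fin n) (x x' : Fin n → α) :
    iid n p (Function.update x j (x' j)) * iid n p (Function.update x' j (x j))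
      = iid n p x * iid n p x' := by
  simp only [iid, ← Finset.prod_mul_distrib]
  refine Finset.prod_congr rfl fun i _ => ?_
  rcases eq_or_ne i j with rfl | hi
  · simp [mul_comm]
  · simp [Function.update_of_ne hi]

lemma condIndep_iid_of_update {υ δ : Type*} [Fintype υ] [Fintype δ] (p : α → ℝ) (j : Fin n)
    (π : α → δ) (U : (Fin n → α) → υ)
    (hU : ∀ x a, π a = π (x j) → U (Function.update x j a) = U x) :
    CondIndep (iid n p) U (fun x => x j) (fun x => π (x j)) := by
  let swap : (Fin n → α) × (Fin n → α) → (Fin n → α) × (Fin n → α) :=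
    fun w => (Function.update w.1 j (w.2 j), Function.update w.2 j (w.1 j))
  have hswap : Function.Involutive swap := fun w => by
    simp [swap, Function.update_idem, Function.update_eq_self]
  intro b c s
  simp only [pmap, Finset.sum_mul_sum, ← Fintype.sum_prod_type']
  -- exchange the `j`-th letters of the two independent blocks in the double sum
  conv_rhs => rw [← Equiv.sum_comp (hswap.toPerm swap)]
  refine Finset.sum_congr rfl fun w _ => ?_
  simp only [Function.Involutive.coe_toPerm, swap, Function.update_self, Prod.mk.injEq]
  by_cases h₁ : π (w.1 j) = s <;> by_cases h₂ : π (w.2 j) = s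
  · rw [hU w.1 (w.2 j) (h₂.trans h₁.symm)]
    simp only [h₁, h₂, and_true, if_true]
    by_cases hb : U w.1 = b
    · by_cases hc : w.1 j = c
      · rw [if_pos ⟨hb, hc⟩, if_pos hb, if_pos hc, iid_update_mul_iid_update]
      · rw [if_neg fun h => hc h.2, if_neg hc]
        simp
    · rw [if_neg fun h => hb h.1, if_neg hb]
      simp
  all_goals simp [h₁, h₂]

end Iid

noncomputable def timeShared [Fintype α] (n : ℕ) (p : α → ℝ) : Fin n × (Fin n → α) → ℝ :=
  fun w => (n : ℝ)⁻¹ * iid n p w.2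

section TimeShared

variable [Fintype α] {n : ℕ} {p : α → ℝ}

lemma isPMF_timeShared (hn : 0 < n) (hp : IsPMF p) : IsPMF (timeShared n p) := by
  refine ⟨fun w => mul_nonneg (by positivity) (iid_nonneg hp.1 w.2), ?_⟩
  simp [timeShared, Fintype.sum_prod_type, ← Finset.mul_sum, (isPMF_iid hp n).2, hn.ne']

lemma pmap_timeShared [Fintype β] (G : Fin n → (Fin n → α) → β) (b : β) :
    pmap (fun w => G w.1 w.2) (timeShared n p) b = (n : ℝ)⁻¹ * ∑ j, pmap (G j) (iid n p) b := by
  simp only [pmap, timeShared, Fintype.sum_prod_type, Finset.mul_sum, mul_ite, mul_zero]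

lemma pmap_timeShared_letter [Fintype β] (hn : 0 < n) (hp : IsPMF p) (ℓ : α → β) :
    pmap (fun w => ℓ (w.2 w.1)) (timeShared n p) = pmap ℓ p := by
  funext b
  rw [pmap_timeShared (fun j x => ℓ (x j))]
  simp [pmap_iid_apply hp, hn.ne']

lemma Hof_timeShared [Fintype β] (hn : 0 < n) (hp : IsPMF p) (G : Fin n → (Fin n → α) → β)
    (hG : ∀ j j' x x', G j x = G j' x' → j = j') :
    Hof (timeShared n p) (fun w => G w.1 w.2)
      = Real.log n + (n : ℝ)⁻¹ * ∑ j, Hof (iid n p) (G j) := by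
  have hP : ∀ j x, pmap (fun w => G w.1 w.2) (timeShared n p) (G j x)
      = (n : ℝ)⁻¹ * pmap (G j) (iid n p) (G j x) := fun j x => by
    rw [pmap_timeShared, Fintype.sum_eq_single j fun j' hj' =>
      pmap_eq_zero_of_forall_ne fun x' h => hj' (hG _ _ _ _ h)]
  have hterm : ∀ j x, timeShared n p (j, x) * Real.log ((n : ℝ)⁻¹ * pmap (G j) (iid n p) (G j x))
      = (n : ℝ)⁻¹ * (iid n p x * Real.log (pmap (G j) (iid n p) (G j x)))
        - (n : ℝ)⁻¹ * Real.log n * iid n p x := fun j x => by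
    rcases eq_or_ne (iid n p x) 0 with h | h
    · simp [timeShared, h]
    · have hpos := (lt_of_le_of_ne (iid_nonneg hp.1 x) (Ne.symm h)).trans_le
        (le_pmap_apply_self (iid_nonneg hp.1) (G j) x)
      rw [Real.log_mul (by simp [hn.ne']) hpos.ne', Real.log_inv, timeShared]
      ring
  rw [Hof_eq_neg_sum, Fintype.sum_prod_type]
  simp only [hP, hterm, Finset.sum_sub_distrib, ← Finset.mul_sum, (isPMF_iid hp n).2,
    Hof_eq_neg_sum, Finset.sum_const, Finset.card_univ, Fintype.card_fin, nsmul_eq_mul, mul_one,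
    Finset.sum_neg_distrib]
  field_simp
  ring

lemma condIndep_timeShared {υ : Type*} [Fintype γ] [Fintype σ] [Fintype υ] (hn : 0 < n)
    (hp : IsPMF p) (U : Fin n → (Fin n → α) → υ) (g : α → γ) (m : α → σ)
    (hU : ∀ j, CondIndep (iid n p) (U j) (fun x => g (x j)) (fun x => m (x j))) :
    CondIndep (timeShared n p) (fun w => U w.1 w.2) (fun w => g (w.2 w.1))
      (fun w => m (w.2 w.1)) := by
  intro b c s
  have hm := pmap_timeShared_letter hn hp m
  have hgm := pmap_timeShared_letter hn hp fun a => (g a, m a)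
  rw [hm, hgm, pmap_timeShared (fun j x => (U j x, g (x j), m (x j))),
    pmap_timeShared (fun j x => (U j x, m (x j))), mul_assoc, mul_assoc, Finset.sum_mul,
    Finset.sum_mul]
  congr 1
  refine Finset.sum_congr rfl fun j _ => ?_
  have h := hU j b c s
  rwa [pmap_iid_apply hp j m, pmap_iid_apply hp j fun a => (g a, m a)] at h

end TimeShared

def past {δ : Type*} {n : ℕ} (m : ℕ) (y : Fin n → δ) : Fin n → Option δ :=
  fun i => if (i : ℕ) < m then some (y i) else none

lemma past_eq_past_iff {δ : Type*} {n m : ℕ} {y y' : Fin n → δ} :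
    past m y = past m y' ↔ ∀ i : Fin n, (i : ℕ) < m → y i = y' i := by
  simp only [funext_iff, past]
  refine forall_congr' fun i => ?_
  split_ifs <;> simp [*]

/-- As `m` runs from `0` to `n`, the entropies `H(F(X^n), h(X_1), …, h(X_m))` telescope from
`H(F(X^n))` to `H(h(X^n)) = n H(h(X))`. -/
lemma MI_timeShared {D ε : Type*} [Fintype α] [Fintype β] [Fintype D] [Fintype ε] {n : ℕ}
    {p : α → ℝ} (hn : 0 < n) (hp : IsPMF p) (U : Fin n → (Fin n → α) → D) (h : α → ε)
    (F : (Fin n → α) → β)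
    (hU : ∀ j j' x x', U j x = U j' x' ↔
      j = j' ∧ F x = F x' ∧ ∀ i : Fin n, (i : ℕ) < j → h (x i) = h (x' i))
    (hF : ∀ x x', (∀ i, h (x i) = h (x' i)) → F x = F x') :
    MI (timeShared n p) (fun w => U w.1 w.2) (fun w => h (w.2 w.1)) = Hof (iid n p) F / n := by
  let A : ℕ → ℝ := fun m => Hof (iid n p) fun x => (F x, past m fun i => h (x i))
  have hA : ∀ j : Fin n, Hof (iid n p) (U j) = A j := fun j =>
    Hof_congr fun x x' => by simp [hU, past_eq_past_iff]
  have hA_succ : ∀ j : Fin n, Hof (iid n p) (fun x => (U j x, h (x j))) = A (j + 1) := fun j =>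
    Hof_congr fun x x' => by
      simp only [Prod.mk.injEq, hU, past_eq_past_iff, true_and]
      constructor
      · rintro ⟨⟨hFx, hlt⟩, hj⟩
        refine ⟨hFx, fun i hi => (Nat.lt_succ_iff_lt_or_eq.mp hi).elim (hlt i) fun e => ?_⟩
        rwa [Fin.ext e]
      · rintro ⟨hFx, hle⟩
        exact ⟨⟨hFx, fun i hi => hle i (by omega)⟩, hle j (by omega)⟩
  have hA_zero : A 0 = Hof (iid n p) F := Hof_congr fun x x' => by simp [past_eq_past_iff]
  have hA_n : A n = n * Hof p h := by
    rw [← Hof_iid_map hp h]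
    refine Hof_congr fun x x' => ?_
    simp only [Prod.mk.injEq, past_eq_past_iff]
    rw [funext_iff]
    exact ⟨fun e i => e.2 i i.isLt, fun e => ⟨hF x x' e, fun i _ => e i⟩⟩
  have hJ : ∀ j j' x x', U j x = U j' x' → j = j' := fun j j' x x' e => ((hU j j' x x').mp e).1
  have htel : ∑ j : Fin n, A j - ∑ j : Fin n, A (j + 1) = A 0 - A n := by
    rw [← Finset.sum_sub_distrib, Fin.sum_univ_eq_sum_range (fun m => A m - A (m + 1)),
      Finset.sum_range_sub']
  rw [MI, Hof_timeShared hn hp U hJ,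
    Hof_timeShared hn hp (fun j x => (U j x, h (x j)))
      fun j j' x x' e => hJ _ _ _ _ (congrArg Prod.fst e),
    Hof, pmap_timeShared_letter hn hp h]
  simp only [hA, hA_succ]
  have hn' : (n : ℝ) ≠ 0 := by positivity
  calc _ = Hof p h + (n : ℝ)⁻¹ * (∑ j : Fin n, A j - ∑ j : Fin n, A (j + 1)) := by rw [Hof]; ring
    _ = Hof (iid n p) F / n := by rw [htel, hA_zero, hA_n]; field_simp; ring

lemma restr_eq_restr_iff {𝒯 : Fin K → Type} {T : Finset (Fin K)} {x y : ∀ k, 𝒯 k} :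
    restr T x = restr T y ↔ ∀ k ∈ T, x k = y k := by
  simp [funext_iff, restr]

lemma restr_singleton_eq_iff {𝒯 : Fin K → Type} {k : Fin K} {x y : ∀ k, 𝒯 k} :
    restr {k} x = restr {k} y ↔ x k = y k := by
  simp [restr_eq_restr_iff]

lemma restr_union_eq_iff {𝒯 : Fin K → Type} {A B : Finset (Fin K)} {x y : ∀ k, 𝒯 k} :
    restr (A ∪ B) x = restr (A ∪ B) y ↔ restr A x = restr A y ∧ restr B x = restr B y := by
  simp only [restr_eq_restr_iff, Finset.mem_union, or_imp, forall_and]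

section AuxVar

variable {𝒴 : Fin K → Type} {n : ℕ} {M : Fin K → ℕ} (f : ∀ k, (Fin n → 𝒴 k) → Fin (M k))

def messages (x : Fin n → ∀ k, 𝒴 k) : ∀ k, Fin (M k) :=
  fun k => f k fun i => x i k

def auxVar (j : Fin n) (x : Fin n → ∀ k, 𝒴 k) :
    ∀ k, Fin n × Fin (M k) × (Fin n → Option (𝒴 k)) :=
  fun k => (j, f k fun i => x i k, past j fun i => x i k)

lemma restr_auxVar_eq_iff {T : Finset (Fin K)} (hT : T.Nonempty) (j j' : Fin n)
    (x x' : Fin n → ∀ k, 𝒴 k) :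
    restr T (auxVar f j x) = restr T (auxVar f j' x') ↔ j = j' ∧
      restr T (messages f x) = restr T (messages f x') ∧
      ∀ i : Fin n, (i : ℕ) < j → restr T (x i) = restr T (x' i) := by
  obtain ⟨k₀, hk₀⟩ := hT
  rcases eq_or_ne j j' with rfl | hj
  · simp only [restr_eq_restr_iff, auxVar, messages, Prod.mk.injEq, past_eq_past_iff, true_and]
    exact ⟨fun h => ⟨fun k hk => (h k hk).1, fun i hi k hk => (h k hk).2 i hi⟩,
      fun h k hk => ⟨h.1 k hk, fun i hi => h.2 i hi k hk⟩⟩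
  · simp only [hj, false_and, iff_false]
    exact fun h => hj (congrArg Prod.fst (congrFun h ⟨k₀, hk₀⟩))

lemma restr_auxVar_update (S : Finset (Fin K)) (j : Fin n) (x : Fin n → ∀ k, 𝒴 k)
    (a : ∀ k, 𝒴 k) (h : restr S a = restr S (x j)) :
    restr S (auxVar f j (Function.update x j a)) = restr S (auxVar f j x) := by
  funext k
  have hcol : (fun i => Function.update x j a i k.1) = fun i => x i k.1 := funext fun i => by
    rcases eq_or_ne i j with rfl | hi
    · simp only [Function.update_self]
      exact congrFun h k
    · simp [Function.update_of_ne hi]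
  simp only [restr, auxVar, hcol]

end AuxVar

section Witness

variable {n : ℕ} {M : Fin K → ℕ} (f : ∀ k, (Fin n → 𝒳 k) → Fin (M k))

noncomputable def witness (p : (∀ k, 𝒳 k) → ℝ) :
    ((∀ k, Fin n × Fin (M k) × (Fin n → Option (𝒳 k))) × (∀ k, 𝒳 k)) → ℝ :=
  pmap (fun w => (auxVar f w.1 w.2, w.2 w.1)) (timeShared n p)

variable {p : (∀ k, 𝒳 k) → ℝ}

lemma outerWitnessM_witness (hn : 0 < n) (hp : IsPMF p) : OuterWitnessM p (witness f p) := by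
  refine ⟨isPMF_pmap (isPMF_timeShared hn hp) _, ?_, fun S => ?_⟩
  · rw [witness, pmap_comp, pmap_timeShared_letter hn hp (fun a => a), pmap_id]
  · have h := condIndep_timeShared hn hp (fun j x => restr S (auxVar f j x)) (fun a => a) (restr S)
      fun j => condIndep_iid_of_update p j (restr S) _ fun x a => restr_auxVar_update f S j x a
    intro b c s
    simpa only [witness, pmap_comp] using h b c s

lemma MI_witness_restr (hn : 0 < n) (hp : IsPMF p) {T : Finset (Fin K)} (hT : T.Nonempty) :
    MI (witness f p) (fun w => restr T w.1) (fun w => restr T w.2)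
      = Hof (iid n p) (fun x => restr T (messages f x)) / n := by
  rw [witness, MI_pmap]
  refine MI_timeShared hn hp (fun j x => restr T (auxVar f j x)) (restr T) _
    (restr_auxVar_eq_iff f hT) fun x x' h => ?_
  rw [restr_eq_restr_iff]
  exact fun k hk => congrArg (f k) (funext fun i => (restr_eq_restr_iff.mp (h i)) k hk)

lemma MI_witness_apply (hn : 0 < n) (hp : IsPMF p) (k : Fin K) :
    MI (witness f p) (fun w => w.1 k) (fun w => w.2 k)
      = Hof (iid n p) (fun x => messages f x k) / n := calc
  _ = MI (witness f p) (fun w => restr {k} w.1) (fun w => restr {k} w.2) :=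
    MI_congr (fun _ _ => restr_singleton_eq_iff.symm) (fun _ _ => restr_singleton_eq_iff.symm)
  _ = Hof (iid n p) (fun x => restr {k} (messages f x)) / n :=
    MI_witness_restr f hn hp (Finset.singleton_nonempty k)
  _ = _ := congrArg (· / (n : ℝ)) (Hof_congr fun _ _ => restr_singleton_eq_iff)

lemma MI_witness_pair (hn : 0 < n) (hp : IsPMF p) {A B : Finset (Fin K)} (hA : A.Nonempty) :
    MI (witness f p) (fun w => (restr A w.1, restr B w.1)) (fun w => (restr A w.2, restr B w.2))
      = Hof (iid n p) (fun x => (restr A (messages f x), restr B (messages f x))) / n := calc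
  _ = MI (witness f p) (fun w => restr (A ∪ B) w.1) (fun w => restr (A ∪ B) w.2) :=
    MI_congr (fun _ _ => Prod.mk_inj.trans restr_union_eq_iff.symm)
      (fun _ _ => Prod.mk_inj.trans restr_union_eq_iff.symm)
  _ = Hof (iid n p) (fun x => restr (A ∪ B) (messages f x)) / n :=
    MI_witness_restr f hn hp (hA.mono Finset.subset_union_left)
  _ = _ := congrArg (· / (n : ℝ)) (Hof_congr fun _ _ => restr_union_eq_iff.trans Prod.mk_inj.symm)

end Witness

theorem AchievableM.mem_RoM {p : (∀ k, 𝒳 k) → ℝ} (hp : IsPMF p) {μ : Omega K → ℝ}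
    {R : Fin K → ℝ} (h : AchievableM p μ R) : (μ, R) ∈ RoM p := by
  obtain ⟨n, M, f, hn, hM, hμ⟩ := h
  refine ⟨fun k => Fin n × Fin (M k) × (Fin n → Option (𝒳 k)), fun k => inferInstance,
    witness f p, outerWitnessM_witness f hn hp, fun k => ?_, fun AB => ?_⟩
  · rw [MI_witness_apply f hn hp k, div_le_iff₀ (by exact_mod_cast hn)]
    calc Hof (iid n p) (fun x => messages f x k) ≤ Real.log (Fintype.card (Fin (M k))) :=
          ent_le_log_card (isPMF_pmap (isPMF_iid hp n) _)
      _ = Real.log (M k) := by rw [Fintype.card_fin]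
      _ ≤ n * R k := hM k
      _ = R k * n := mul_comm _ _
  · have hμAB : μ AB ≤ MI (iid n p) (fun x => restr AB.1.1 (messages f x))
        (fun x => restr AB.1.2 (messages f x)) / n := hμ AB
    rw [MI_witness_restr f hn hp AB.2.1, MI_witness_restr f hn hp AB.2.2.1,
      MI_witness_pair f hn hp AB.2.1]
    refine hμAB.trans_eq ?_
    rw [MI]
    ring

/-- **Theorem 3 (multi-source outer bound):** every achievable point lies in `R_o`, and
`R_o ⊆ R_o'`. -/
theorem multi_source_outer_bound (p : (∀ k, 𝒳 k) → ℝ) (hp : IsPMF p) :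
    (∀ (μ : Omega K → ℝ) (R : Fin K → ℝ), AchievableM p μ R → (μ, R) ∈ RoM p) ∧
    RoM p ⊆ RoM' p :=
  ⟨fun _ _ h => h.mem_RoM hp, RoM_subset_RoM' p⟩

end Biclustering
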